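/- In the group G(2e,e,3) with e ≥ 2 (triples (a,b,c | σ), a,b,c ∈ Z_{2e}, a+b+c ≡ 0 mod e, σ ∈ S_3), let t = (e,0,0 | id), s = (-1,1,0 | (1 2)), r_1 = (0,0,0 | (1 2)), r_2 = (0,0,0 | (2 3)). Then the element t s r_1 r_2 = (e-1, 1, 0 | (2 3)) has order 4e, with (t s r_1 r_2)^{2i} = (i(2e-2), i, i | id) and (t s r_1 r_2)^{2i+1} = (i(2e-2)+e-1, i+1, i | (2 3)). -/

import Mathlib

/-- The wreath product `ZMod m ≀ Sₙ`: elements `(a | σ)` with `a : Fin n → ZMod m`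
and `σ` a permutation of `{1,…,n}` (i.e. of `Fin n`). -/
structure W (m n : ℕ) : Type where
  a : Fin n → ZMod m
  p : Equiv.Perm (Fin n)

namespace W

lemma ext' {m n : ℕ} {x y : W m n} (h1 : x.a = y.a) (h2 : x.p = y.p) : x = y := by
  cases x; cases y; cases h1; cases h2; rfl

instance (m n : ℕ) : Mul (W m n) :=
  ⟨fun x y => ⟨fun i => x.a i + y.a (x.p i), y.p * x.p⟩⟩

instance (m n : ℕ) : One (W m n) := ⟨⟨0, 1⟩⟩

instance (m n : ℕ) : Inv (W m n) :=
  ⟨fun x => ⟨fun i => -(x.a (x.p.symm i)), x.p⁻¹⟩⟩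

lemma mul_def {m n : ℕ} (x y : W m n) :
    x * y = ⟨fun i => x.a i + y.a (x.p i), y.p * x.p⟩ := rfl

lemma one_def {m n : ℕ} : (1 : W m n) = ⟨0, 1⟩ := rfl

lemma inv_def {m n : ℕ} (x : W m n) :
    x⁻¹ = ⟨fun i => -(x.a (x.p.symm i)), x.p⁻¹⟩ := rfl

/-- The wreath product group structure, with multiplication
`(a | σ)(b | τ) = (aᵢ + b_{σ(i)} | στ)` (where `στ` means: apply `σ` first). -/
instance (m n : ℕ) : Group (W m n) where
  mul_assoc x y z := by
    refine ext' (funext fun i => ?_) ?_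
    · show (x.a i + y.a (x.p i)) + z.a ((y.p * x.p) i)
        = x.a i + (y.a (x.p i) + z.a (y.p (x.p i)))
      simp [Equiv.Perm.mul_apply, add_assoc]
    · show (z.p * (y.p * x.p)) = (z.p * y.p) * x.p
      exact (mul_assoc _ _ _).symm
  one_mul x := by
    refine ext' (funext fun i => ?_) ?_
    · show 0 + x.a ((1 : Equiv.Perm (Fin _)) i) = x.a i; simp
    · show x.p * 1 = x.p; simp
  mul_one x := by
    refine ext' (funext fun i => ?_) ?_
    · show x.a i + 0 = x.a i; simp
    · show 1 * x.p = x.p; simp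
  inv_mul_cancel x := by
    refine ext' (funext fun i => ?_) ?_
    · simp [mul_def, inv_def, one_def, Equiv.Perm.inv_def]
    · simp [mul_def, inv_def, one_def, Equiv.Perm.inv_def]; exact mul_inv_cancel x.p

end W

/-- The subgroup of `ZMod m ≀ Sₙ` of elements whose diagonal entries sum to `0 mod e`.
For `m = d*e` this is the imprimitive complex reflection group `G(de,e,n)`. -/
def Gsub (m e n : ℕ) (h : e ∣ m) : Subgroup (W m n) where
  carrier := {x | ZMod.castHom h (ZMod e) (∑ i, x.a i) = 0}
  one_mem' := by simp [W.one_def]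
  mul_mem' := by
    intro x y hx hy
    show ZMod.castHom h (ZMod e) (∑ i, (x.a i + y.a (x.p i))) = 0
    rw [Finset.sum_add_distrib, Equiv.sum_comp x.p y.a, map_add]
    rw [Set.mem_setOf_eq] at hx hy
    rw [hx, hy, add_zero]
  inv_mem' := by
    intro x hx
    show ZMod.castHom h (ZMod e) (∑ i, -(x.a (x.p.symm i))) = 0
    rw [Finset.sum_neg_distrib, Equiv.sum_comp x.p.symm x.a, map_neg]
    rw [Set.mem_setOf_eq] at hx
    rw [hx, neg_zero]

lemma mem_Gsub {m e n : ℕ} (h : e ∣ m) (x : W m n) :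
    x ∈ Gsub m e n h ↔ ZMod.castHom h (ZMod e) (∑ i, x.a i) = 0 := Iff.rfl

/-- The imprimitive complex reflection group `G(de,e,n)`. -/
abbrev Gde (d e n : ℕ) : Subgroup (W (d * e) n) := Gsub (d * e) e n (dvd_mul_left e d)

/-- A Hamiltonian cycle in the (undirected, right) Cayley graph `Γ(G,S)`,
encoded as the list of edge labels (from `S ∪ S⁻¹`) along the cycle starting at `1`:
the partial products visit every element of `G` exactly once and the
total product returns to `1`. -/
def IsHamCycle {G : Type*} [Group G] (S : Set G) (l : List G) : Prop :=
  (∀ x ∈ l, x ∈ S ∨ x⁻¹ ∈ S) ∧ l.prod = 1 ∧ l.length = Nat.card G ∧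
    ((List.range l.length).map fun k => (l.take k).prod).Nodup

/-! Writing `g = (e-1, 1, 0 | (2 3))`, the permutation part of `g` is an involution, so
`g² = (2e-2, 1, 1 | id)` is a pure translation: the even powers of `g` are its multiples and
the odd powers still carry the transposition. The entry `1` of `g²` has additive order `2e`
in `ZMod (2e)`, hence `g` has order `4e`. -/

namespace W

variable {m n : ℕ}

lemma mk_one_pow (v : Fin n → ZMod m) (k : ℕ) : (⟨v, 1⟩ : W m n) ^ k = ⟨k • v, 1⟩ := by
  induction k with
  | zero => rw [pow_zero, zero_smul, one_def]
  | succ k ih =>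
    rw [pow_succ, ih, mul_def]
    congr 1
    funext i
    simp [add_smul]

lemma sq_of_perm_sq_eq_one (x : W m n) (hx : x.p ^ 2 = 1) :
    x ^ 2 = ⟨x.a + x.a ∘ x.p, 1⟩ := by
  rw [pow_two, mul_def, ← pow_two, hx]
  rfl

lemma pow_two_mul_of_perm_sq_eq_one (x : W m n) (hx : x.p ^ 2 = 1) (k : ℕ) :
    x ^ (2 * k) = ⟨k • (x.a + x.a ∘ x.p), 1⟩ := by
  rw [pow_mul, sq_of_perm_sq_eq_one x hx, mk_one_pow]

lemma pow_two_mul_add_one_of_perm_sq_eq_one (x : W m n) (hx : x.p ^ 2 = 1) (k : ℕ) :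
    x ^ (2 * k + 1) = ⟨k • (x.a + x.a ∘ x.p) + x.a, x.p⟩ := by
  rw [pow_succ, pow_two_mul_of_perm_sq_eq_one x hx, mul_def]
  rfl

lemma orderOf_of_perm_sq_eq_one (x : W m n) (hx : x.p ^ 2 = 1) (hp : x.p ≠ 1) :
    orderOf x = 2 * addOrderOf (x.a + x.a ∘ x.p) := by
  apply Nat.dvd_antisymm
  · rw [orderOf_dvd_iff_pow_eq_one, pow_two_mul_of_perm_sq_eq_one x hx, addOrderOf_nsmul_eq_zero]
    rfl
  · obtain ⟨k, hk | hk⟩ := Nat.even_or_odd' (orderOf x)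
    · have hk1 := pow_orderOf_eq_one x
      rw [hk, pow_two_mul_of_perm_sq_eq_one x hx, one_def, mk.injEq] at hk1
      rw [hk]
      exact Nat.mul_dvd_mul_left 2 (addOrderOf_dvd_of_nsmul_eq_zero hk1.1)
    · have hk1 := pow_orderOf_eq_one x
      rw [hk, pow_two_mul_add_one_of_perm_sq_eq_one x hx, one_def, mk.injEq] at hk1
      exact absurd hk1.2 hp

end W

lemma addOrderOf_eq_of_apply_eq_one {ι : Type*} {m : ℕ} (v : ι → ZMod m) (i : ι) (hv : v i = 1) :
    addOrderOf v = m := by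
  apply Nat.dvd_antisymm
  · rw [addOrderOf_dvd_iff_nsmul_eq_zero]
    funext j
    simp [nsmul_eq_mul]
  · simpa [hv, ZMod.addOrderOf_one] using addOrderOf_map_dvd (Pi.evalAddMonoidHom _ i) v

section

variable {m : ℕ} (c : ZMod m)

lemma swap_one_two_sq : (Equiv.swap 1 2 : Equiv.Perm (Fin 3)) ^ 2 = 1 := by
  rw [pow_two, Equiv.swap_mul_self]

lemma vec_add_comp_swap_one_two :
    ![c, 1, 0] + ![c, 1, 0] ∘ Equiv.swap (1 : Fin 3) 2 = ![c + c, 1, 1] := by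
  funext i
  fin_cases i <;> simp [Equiv.swap_apply_of_ne_of_ne]

lemma pow_two_mul_mk_swap_one_two (k : ℕ) :
    (⟨![c, 1, 0], Equiv.swap 1 2⟩ : W m 3) ^ (2 * k) = ⟨k • ![c + c, 1, 1], 1⟩ := by
  rw [W.pow_two_mul_of_perm_sq_eq_one _ swap_one_two_sq, vec_add_comp_swap_one_two]

lemma pow_two_mul_add_one_mk_swap_one_two (k : ℕ) :
    (⟨![c, 1, 0], Equiv.swap 1 2⟩ : W m 3) ^ (2 * k + 1)
      = ⟨k • ![c + c, 1, 1] + ![c, 1, 0], Equiv.swap 1 2⟩ := by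
  rw [W.pow_two_mul_add_one_of_perm_sq_eq_one _ swap_one_two_sq, vec_add_comp_swap_one_two]

lemma orderOf_mk_swap_one_two : orderOf (⟨![c, 1, 0], Equiv.swap 1 2⟩ : W m 3) = 2 * m := by
  rw [W.orderOf_of_perm_sq_eq_one _ swap_one_two_sq
    (show Equiv.swap (1 : Fin 3) 2 ≠ 1 by decide), vec_add_comp_swap_one_two,
    addOrderOf_eq_of_apply_eq_one _ 1 rfl]

end

/-- from Lemma 4.6. In `G(2e,e,3)` with `e ≥ 2`, with
`t = (e,0,0 | id)`, `s = (-1,1,0 | (1 2))`, `r₁ = (0,0,0 | (1 2))`,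
`r₂ = (0,0,0 | (2 3))`, the element `t s r₁ r₂ = (e-1, 1, 0 | (2 3))` has order `4e`,
with `(t s r₁ r₂)^(2i) = (i(2e-2), i, i | id)` and
`(t s r₁ r₂)^(2i+1) = (i(2e-2)+e-1, i+1, i | (2 3))` for `0 ≤ i < 2e`. -/
theorem stmt10 (e : ℕ) (he : 2 ≤ e)
    (t s r₁ r₂ : Gde 2 e 3)
    (ht : (t : W (2 * e) 3) = ⟨![(e : ZMod (2 * e)), 0, 0], 1⟩)
    (hs : (s : W (2 * e) 3) = ⟨![-1, 1, 0], Equiv.swap 0 1⟩)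
    (hr₁ : (r₁ : W (2 * e) 3) = ⟨![0, 0, 0], Equiv.swap 0 1⟩)
    (hr₂ : (r₂ : W (2 * e) 3) = ⟨![0, 0, 0], Equiv.swap 1 2⟩) :
    ((t * s * r₁ * r₂ : Gde 2 e 3) : W (2 * e) 3)
      = ⟨![(e : ZMod (2 * e)) - 1, 1, 0], Equiv.swap 1 2⟩ ∧
    orderOf (t * s * r₁ * r₂) = 4 * e ∧
    (∀ i < 2 * e, (((t * s * r₁ * r₂) ^ (2 * i) : Gde 2 e 3) : W (2 * e) 3)
      = ⟨![((i * (2 * e - 2) : ℕ) : ZMod (2 * e)), (i : ZMod (2 * e)),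
          (i : ZMod (2 * e))], 1⟩) ∧
    (∀ i < 2 * e, (((t * s * r₁ * r₂) ^ (2 * i + 1) : Gde 2 e 3) : W (2 * e) 3)
      = ⟨![((i * (2 * e - 2) : ℕ) : ZMod (2 * e)) + (e : ZMod (2 * e)) - 1,
          (i : ZMod (2 * e)) + 1, (i : ZMod (2 * e))], Equiv.swap 1 2⟩) := by
  have hg : ((t * s * r₁ * r₂ : Gde 2 e 3) : W (2 * e) 3)
      = ⟨![(e : ZMod (2 * e)) - 1, 1, 0], Equiv.swap 1 2⟩ := by
    simp only [Subgroup.coe_mul, ht, hs, hr₁, hr₂, W.mul_def, W.mk.injEq]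
    constructor
    · funext i
      fin_cases i <;> simp [sub_eq_add_neg, Equiv.swap_apply_of_ne_of_ne]
    · decide
  have hc (i : ℕ) : ((i * (2 * e - 2) : ℕ) : ZMod (2 * e))
      = i • ((e : ZMod (2 * e)) - 1 + ((e : ZMod (2 * e)) - 1)) := by
    push_cast [Nat.cast_sub (by omega : 2 ≤ 2 * e), nsmul_eq_mul]
    ring
  refine ⟨hg, ?_, fun i _ => ?_, fun i _ => ?_⟩
  · rw [← Subgroup.orderOf_coe, hg, orderOf_mk_swap_one_two]
    ring
  · rw [SubgroupClass.coe_pow, hg, pow_two_mul_mk_swap_one_two, hc]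
    simp [Matrix.smul_cons]
  · rw [SubgroupClass.coe_pow, hg, pow_two_mul_add_one_mk_swap_one_two, hc]
    simp [Matrix.smul_cons, add_sub_assoc]
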